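/- Let K be a number field of degree d. There exists a constant κ > 0, depending only on K, such that for every nonzero prime ideal 𝔭 of 𝒪_K there exists π ∈ 𝒪_K with v_𝔭(π) = 1 and max over archimedean places v of |π|_v ≤ κ·(N𝔭)^{1/d}. -/

import Mathlib

/-!
Minkowski's convex body theorem applied to `𝔭` gives a nonzero `π ∈ 𝔭` with
`|π|_v < τ · N𝔭^(1/d)` at every place, with `τ` depending only on `K`; hence
`|N(π)| < τ^d · N𝔭`. If `π` were in `𝔭²` then `N𝔭² ∣ N(π)`, which is impossible once
`N𝔭 ≥ τ^d`. There are only finitely many primes of smaller norm, and each of them is handled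
by enlarging `κ`.
-/

open NumberField NumberField.InfinitePlace NumberField.mixedEmbedding MeasureTheory Filter
open scoped NNReal ENNReal nonZeroDivisors

theorem Ideal.absNorm_pow_le_absNorm_span_singleton {S : Type*} [CommRing S] [IsDedekindDomain S]
    [Module.Free ℤ S] [Module.Finite ℤ S] {I : Ideal S} {n : ℕ} {x : S} (hx : x ∈ I ^ n)
    (hx0 : x ≠ 0) : Ideal.absNorm I ^ n ≤ Ideal.absNorm (Ideal.span {x}) := by
  refine Nat.le_of_dvd (Nat.pos_of_ne_zero ?_) ?_
  · rwa [Ne, Ideal.absNorm_eq_zero_iff, Ideal.span_singleton_eq_bot]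
  · rw [← map_pow]
    exact Ideal.absNorm_dvd_absNorm_of_le ((Ideal.span_singleton_le_iff_mem _).2 hx)

namespace NumberField

variable {K : Type*} [Field K] [NumberField K]

theorem InfinitePlace.prod_pow_mult_const {M : Type*} [CommMonoid M] (c : M) :
    ∏ w : InfinitePlace K, c ^ mult w = c ^ Module.finrank ℚ K := by
  rw [Finset.prod_pow_eq_pow_sum, sum_mult_eq]

theorem InfinitePlace.abs_norm_lt_pow_of_forall_lt {x : K} (hx : x ≠ 0) {B : ℝ}
    (hB : ∀ w : InfinitePlace K, w x < B) :
    |(Algebra.norm ℚ x : ℝ)| < B ^ Module.finrank ℚ K := by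
  rw [← Rat.cast_abs, ← prod_eq_abs_norm, ← prod_pow_mult_const]
  exact Finset.prod_lt_prod_of_nonempty (fun w _ ↦ pow_pos (pos_iff.2 hx) _)
    (fun w _ ↦ pow_lt_pow_left₀ (hB w) (apply_nonneg w x) mult_pos.ne') Finset.univ_nonempty

theorem mixedEmbedding.minkowskiBound_eq_absNorm_mul (I : (FractionalIdeal (𝓞 K)⁰ K)ˣ) :
    minkowskiBound K I =
      .ofReal (FractionalIdeal.absNorm (I : FractionalIdeal (𝓞 K)⁰ K)) * minkowskiBound K 1 := by
  rw [minkowskiBound, minkowskiBound, volume_fundamentalDomain_fractionalIdealLatticeBasis,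
    volume_fundamentalDomain_fractionalIdealLatticeBasis, Units.val_one,
    FractionalIdeal.absNorm_one, Rat.cast_one, ENNReal.ofReal_one, one_mul, mul_assoc]

theorem exists_ne_zero_mem_ideal_forall_lt_mul_absNorm_rpow {I : Ideal (𝓞 K)} (hI : I ≠ ⊥)
    {τ : ℝ≥0} (hτ : minkowskiBound K 1 < τ ^ Module.finrank ℚ K) :
    ∃ π ∈ I, π ≠ 0 ∧ ∀ w : InfinitePlace K,
      w (π : K) < τ * (Ideal.absNorm I : ℝ) ^ ((1 : ℝ) / Module.finrank ℚ K) := by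
  classical
  set d := Module.finrank ℚ K
  set N := Ideal.absNorm I
  set c : ℝ≥0 := τ * (N : ℝ≥0) ^ ((1 : ℝ) / d)
  have hI' : (I : FractionalIdeal (𝓞 K)⁰ K) ≠ 0 := FractionalIdeal.coeIdeal_ne_zero.2 hI
  have hN : (N : ℝ≥0∞) ≠ 0 := by simpa [N, Ideal.absNorm_eq_zero_iff] using hI
  have hvol : minkowskiBound K (Units.mk0 _ hI') < volume (convexBodyLT K fun _ ↦ c) := by
    rw [convexBodyLT_volume, minkowskiBound_eq_absNorm_mul, Units.val_mk0,
      FractionalIdeal.coeIdeal_absNorm, InfinitePlace.prod_pow_mult_const, mul_pow, one_div,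
      NNReal.rpow_inv_natCast_pow _ Module.finrank_pos.ne']
    calc _ = (N : ℝ≥0∞) * minkowskiBound K 1 := by simp [N]
      _ < N * τ ^ d := ENNReal.mul_lt_mul_right hN (ENNReal.natCast_ne_top N) hτ
      _ ≤ convexBodyLTFactor K * (τ ^ d * N) := by
          rw [mul_comm (N : ℝ≥0∞)]
          exact le_mul_of_one_le_left zero_le (mod_cast one_le_convexBodyLTFactor K)
      _ = _ := by norm_cast
  obtain ⟨a, ha, ha0, hlt⟩ := exists_ne_zero_mem_ideal_lt K _ hvol
  obtain ⟨π, hπ, rfl⟩ := (FractionalIdeal.mem_coeIdeal _).1 ha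
  exact ⟨π, hπ, by rintro rfl; simp at ha0, fun w ↦ by simpa [c] using hlt w⟩

theorem sq_absNorm_le_abs_norm_of_mem_sq {p : Ideal (𝓞 K)} {π : 𝓞 K} (hπ : π ∈ p ^ 2)
    (hπ0 : π ≠ 0) : (Ideal.absNorm p : ℝ) ^ 2 ≤ |(Algebra.norm ℚ (π : K) : ℝ)| := by
  have h := Ideal.absNorm_pow_le_absNorm_span_singleton hπ hπ0
  rw [Ideal.absNorm_span_singleton] at h
  rw [← Algebra.coe_norm_int, Rat.cast_intCast, ← Int.cast_abs, ← Nat.cast_natAbs]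
  exact_mod_cast h

theorem notMem_sq_of_forall_lt_mul_absNorm_rpow {p : Ideal (𝓞 K)} {π : 𝓞 K} (hπ0 : π ≠ 0)
    {τ : ℝ} (hτ : τ ^ Module.finrank ℚ K ≤ Ideal.absNorm p)
    (hπ : ∀ w : InfinitePlace K,
      w (π : K) < τ * (Ideal.absNorm p : ℝ) ^ ((1 : ℝ) / Module.finrank ℚ K)) :
    π ∉ p ^ 2 := by
  intro hπ2
  have hupper : |(Algebra.norm ℚ (π : K) : ℝ)| < τ ^ Module.finrank ℚ K * Ideal.absNorm p := by
    have := InfinitePlace.abs_norm_lt_pow_of_forall_lt (by simpa using hπ0) hπ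
    rwa [mul_pow, one_div, Real.rpow_inv_natCast_pow (Nat.cast_nonneg _)
      Module.finrank_pos.ne'] at this
  have hN : (0 : ℝ) ≤ Ideal.absNorm p := Nat.cast_nonneg _
  nlinarith [sq_absNorm_le_abs_norm_of_mem_sq hπ2 hπ0]

variable (K) in
theorem exists_nat_forall_exists_notMem_sq_of_pow_le_absNorm :
    ∃ τ : ℕ, ∀ p : Ideal (𝓞 K), p ≠ ⊥ → τ ^ Module.finrank ℚ K ≤ Ideal.absNorm p →
      ∃ π ∈ p, π ∉ p ^ 2 ∧ ∀ w : InfinitePlace K,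
        w (π : K) ≤ τ * (Ideal.absNorm p : ℝ) ^ ((1 : ℝ) / Module.finrank ℚ K) := by
  obtain ⟨τ, hτ⟩ := ENNReal.exists_nat_gt (minkowskiBound_lt_top K 1).ne
  have hτ' : minkowskiBound K 1 < (τ : ℝ≥0) ^ Module.finrank ℚ K := by
    refine hτ.trans_le ?_
    exact_mod_cast Nat.le_self_pow Module.finrank_pos.ne' τ
  refine ⟨τ, fun p hp hτp ↦ ?_⟩
  obtain ⟨π, hπp, hπ0, hπ⟩ := exists_ne_zero_mem_ideal_forall_lt_mul_absNorm_rpow hp hτ'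
  exact ⟨π, hπp, notMem_sq_of_forall_lt_mul_absNorm_rpow hπ0 (mod_cast hτp) hπ,
    fun w ↦ (hπ w).le⟩

theorem eventually_exists_mem_notMem_sq_forall_le {p : Ideal (𝓞 K)} [p.IsPrime] (hp : p ≠ ⊥) :
    ∀ᶠ κ in atTop, ∃ π ∈ p, π ∉ p ^ 2 ∧ ∀ w : InfinitePlace K,
      w (π : K) ≤ κ * (Ideal.absNorm p : ℝ) ^ ((1 : ℝ) / Module.finrank ℚ K) := by
  obtain ⟨π, hπp, hπ2⟩ := SetLike.exists_of_lt (by simpa using Ideal.pow_succ_lt_pow hp 1)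
  have hN : 0 < (Ideal.absNorm p : ℝ) ^ ((1 : ℝ) / Module.finrank ℚ K) := by
    have : Ideal.absNorm p ≠ 0 := by rwa [Ne, Ideal.absNorm_eq_zero_iff]
    positivity
  filter_upwards [eventually_all.2 fun w : InfinitePlace K ↦
    (tendsto_id.atTop_mul_const hN).eventually_ge_atTop (w (π : K))] with κ hκ
  exact ⟨π, hπp, hπ2, hκ⟩

end NumberField

/-- **A "reduced" primitive element for a prime ideal.**
Let `K` be a number field of degree `d`. There is a constant `κ > 0`, depending only on `K`,
such that for every nonzero prime ideal `𝔭` of `𝒪_K` there is `π ∈ 𝒪_K` with `v_𝔭(π) = 1`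
(i.e. `π ∈ 𝔭` but `π ∉ 𝔭²`) and `|π|_v ≤ κ · (N𝔭)^(1/d)` for every archimedean place `v`. -/
theorem reduced_primitive_element_of_prime
    (K : Type*) [Field K] [NumberField K] :
    ∃ κ : ℝ, 0 < κ ∧
      ∀ p : Ideal (𝓞 K), p.IsPrime → p ≠ ⊥ →
        ∃ π : 𝓞 K, π ∈ p ∧ π ∉ p ^ 2 ∧
          ∀ v : InfinitePlace K,
            v (algebraMap (𝓞 K) K π) ≤
              κ * (Ideal.absNorm p : ℝ) ^ ((1 : ℝ) / (Module.finrank ℚ K : ℝ)) := by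
  obtain ⟨τ, hlarge⟩ := exists_nat_forall_exists_notMem_sq_of_pow_le_absNorm K
  set S := {p : Ideal (𝓞 K) | p.IsPrime ∧ p ≠ ⊥ ∧ Ideal.absNorm p ≤ τ ^ Module.finrank ℚ K}
  have hS : S.Finite := (Ideal.finite_setOfPred_absNorm_le _).subset fun p hp ↦ hp.2.2
  have hsmall := (eventually_all_finite hS).2 fun p ⟨hp, hp0, _⟩ ↦
    haveI := hp; eventually_exists_mem_notMem_sq_forall_le hp0
  obtain ⟨κ, hκS, hκ0, hκτ⟩ :=
    (hsmall.and ((eventually_gt_atTop 0).and (eventually_ge_atTop (τ : ℝ)))).exists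
  refine ⟨κ, hκ0, fun p hp hp0 ↦ ?_⟩
  by_cases hpS : p ∈ S
  · exact hκS p hpS
  · obtain ⟨π, hπp, hπ2, hπ⟩ := hlarge p hp0 (not_le.1 fun h ↦ hpS ⟨hp, hp0, h⟩).le
    exact ⟨π, hπp, hπ2, fun w ↦ (hπ w).trans (by gcongr)⟩
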